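/- arXiv:2307.02428 — 2 statements merged into one kernel-verified Lean document; each statement's English description precedes it below -/
import Mathlib

section
/- (Probabilistic core of Theorem on convergence in the sample size J.) Let A ∈ ℤ^{N×M}, u ∈ ℤ^N, let B ∈ ℤ^{M×K} be a lattice basis matrix for A, and let x, x_t ∈ F_A(u). Let q be the product-Skellam probability mass function on ℤ^K with rate vectors λ⁺, λ⁻ ∈ (0,∞)^K, and set p = Σ_{y ∈ ℤ^K : By = x − x_t} q(y). For each J ∈ ℕ, the probability under the J-fold product of q (i.e., for J i.i.d. draws Y_1, …, Y_J from q) that x ≠ x_t + B Y_j for all j ∈ {1,…,J} equals (1 − p)^J, and this probability tends to 0 as J → ∞. -/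
open scoped Classical

/-- The Skellam probability mass function at `z ∈ ℤ`: the law of the difference of two
independent Poisson random variables with rates `lp` and `lm`. -/
noncomputable def skellamPMF (lp lm : ℝ) (z : ℤ) : ℝ :=
  ∑' ab : ℕ × ℕ,
    if (ab.1 : ℤ) - (ab.2 : ℤ) = z then
      (Real.exp (-lp) * lp ^ ab.1 / (Nat.factorial ab.1)) *
        (Real.exp (-lm) * lm ^ ab.2 / (Nat.factorial ab.2))
    else 0

/-- The product-Skellam probability mass function on `ℤ^K` with rate vectors `lp, lm`. -/
noncomputable def productSkellamPMF {K : ℕ} (lp lm : Fin K → ℝ) (y : Fin K → ℤ) : ℝ :=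
  ∏ k, skellamPMF (lp k) (lm k) (y k)

/-! The `J` draws are independent, so the probability that none of them lands in the hit set
`H = {y | B y = x - xₜ}` factorises as `(∑_{y ∉ H} q y) ^ J = (1 - p) ^ J`; the factorisation is
the identity `∑_Y ∏_j f_j (Y j) = ∏_j ∑_y f_j y` for nonnegative summable families.
Since `x - xₜ ∈ ker_ℤ A` lies in the image of `B` and the Skellam mass is positive everywhere,
`p > 0`, hence `(1 - p) ^ J → 0`. -/

open Finset

theorem hasSum_fin_pi_prod {α : Type*} {n : ℕ} {f : Fin n → α → ℝ} {s : Fin n → ℝ}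
    (hf0 : ∀ i a, 0 ≤ f i a) (hf : ∀ i, HasSum (f i) (s i)) :
    HasSum (fun g : Fin n → α => ∏ i, f i (g i)) (∏ i, s i) := by
  induction n with
  | zero => simp
  | succ n ih =>
    have htail : HasSum (fun g : Fin n → α => ∏ i : Fin n, f i.succ (g i)) (∏ i : Fin n, s i.succ) :=
      ih (fun i => hf0 i.succ) (fun i => hf i.succ)
    have hsum := Summable.mul_of_nonneg (hf 0).summable htail.summable (hf0 0) fun _ =>
      prod_nonneg fun _ _ => hf0 _ _
    have hsplit := (hf 0).mul htail hsum
    rw [Fin.prod_univ_succ, ← (Fin.consEquiv fun _ => α).hasSum_iff]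
    simpa [Function.comp_def, Fin.consEquiv, Fin.prod_univ_succ] using hsplit

theorem tsum_ite_forall_mem_prod_eq_pow {α : Type*} {q : α → ℝ} (hq0 : ∀ y, 0 ≤ q y)
    (hq : Summable q) (S : Set α) [DecidablePred (· ∈ S)] (J : ℕ) :
    (∑' Ys : Fin J → α, if ∀ j, Ys j ∈ S then ∏ j, q (Ys j) else 0) = (∑' y : S, q y) ^ J := by
  have hprod := hasSum_fin_pi_prod (n := J) (fun _ => S.indicator_nonneg fun y _ => hq0 y)
    fun _ => (hq.indicator S).hasSum
  rw [_root_.tsum_subtype, ← Fin.prod_const, ← hprod.tsum_eq]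
  refine tsum_congr fun Ys => ?_
  split_ifs with hmem
  · exact prod_congr rfl fun j _ => (S.indicator_of_mem (hmem j) q).symm
  · obtain ⟨j, hj⟩ := not_forall.1 hmem
    exact (prod_eq_zero (mem_univ j) (S.indicator_of_notMem hj q)).symm

theorem tsum_compl_eq_one_sub {α : Type*} {q : α → ℝ} (hq : HasSum q 1) (S : Set α) :
    ∑' y : ↥Sᶜ, q y = 1 - ∑' y : S, q y :=
  eq_sub_of_add_eq' <|
    ((hq.summable.subtype S).tsum_add_tsum_compl (hq.summable.subtype Sᶜ)).trans hq.tsum_eq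

noncomputable def poissonPairPMF (lp lm : ℝ) (ab : ℕ × ℕ) : ℝ :=
  (Real.exp (-lp) * lp ^ ab.1 / (Nat.factorial ab.1)) *
    (Real.exp (-lm) * lm ^ ab.2 / (Nat.factorial ab.2))

section Skellam

variable {lp lm : ℝ}

theorem poissonPairPMF_nonneg (hlp : 0 ≤ lp) (hlm : 0 ≤ lm) (ab : ℕ × ℕ) :
    0 ≤ poissonPairPMF lp lm ab := by
  unfold poissonPairPMF
  positivity

theorem poissonPairPMF_pos (hlp : 0 < lp) (hlm : 0 < lm) (ab : ℕ × ℕ) :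
    0 < poissonPairPMF lp lm ab := by
  unfold poissonPairPMF
  positivity

theorem hasSum_poissonPairPMF (hlp : 0 ≤ lp) (hlm : 0 ≤ lm) :
    HasSum (poissonPairPMF lp lm) 1 := by
  have hp := ProbabilityTheory.hasSum_one_poissonMeasure ⟨lp, hlp⟩
  have hm := ProbabilityTheory.hasSum_one_poissonMeasure ⟨lm, hlm⟩
  have hsum := Summable.mul_of_nonneg hp.summable hm.summable
    (fun _ => by positivity) (fun _ => by positivity)
  rw [← mul_one 1]
  exact hp.mul hm hsum

theorem skellamPMF_eq_tsum_fiber (lp lm : ℝ) (z : ℤ) :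
    skellamPMF lp lm z =
      ∑' ab : (fun ab : ℕ × ℕ => (ab.1 : ℤ) - ab.2) ⁻¹' {z}, poissonPairPMF lp lm ab := by
  simp only [_root_.tsum_subtype, Set.indicator_apply, Set.mem_preimage, Set.mem_singleton_iff]
  rfl

theorem hasSum_skellamPMF (hlp : 0 ≤ lp) (hlm : 0 ≤ lm) : HasSum (skellamPMF lp lm) 1 := by
  simpa only [← skellamPMF_eq_tsum_fiber] using
    (hasSum_poissonPairPMF hlp hlm).tsum_fiberwise fun ab : ℕ × ℕ => (ab.1 : ℤ) - ab.2

theorem skellamPMF_nonneg (hlp : 0 ≤ lp) (hlm : 0 ≤ lm) (z : ℤ) : 0 ≤ skellamPMF lp lm z := by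
  rw [skellamPMF_eq_tsum_fiber]
  exact tsum_nonneg fun ab => poissonPairPMF_nonneg hlp hlm ab

theorem skellamPMF_pos (hlp : 0 < lp) (hlm : 0 < lm) (z : ℤ) : 0 < skellamPMF lp lm z := by
  rw [skellamPMF_eq_tsum_fiber]
  refine ((hasSum_poissonPairPMF hlp.le hlm.le).summable.subtype _).tsum_pos
    (fun ab => poissonPairPMF_nonneg hlp.le hlm.le ab) ⟨(z.toNat, (-z).toNat), ?_⟩
    (poissonPairPMF_pos hlp hlm _)
  simp only [Set.mem_preimage, Set.mem_singleton_iff]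
  omega

end Skellam

section ProductSkellam

variable {K : ℕ} {lp lm : Fin K → ℝ}

theorem productSkellamPMF_nonneg (hlp : ∀ k, 0 ≤ lp k) (hlm : ∀ k, 0 ≤ lm k) (y : Fin K → ℤ) :
    0 ≤ productSkellamPMF lp lm y :=
  prod_nonneg fun k _ => skellamPMF_nonneg (hlp k) (hlm k) (y k)

theorem productSkellamPMF_pos (hlp : ∀ k, 0 < lp k) (hlm : ∀ k, 0 < lm k) (y : Fin K → ℤ) :
    0 < productSkellamPMF lp lm y :=
  prod_pos fun k _ => skellamPMF_pos (hlp k) (hlm k) (y k)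

theorem hasSum_productSkellamPMF (hlp : ∀ k, 0 ≤ lp k) (hlm : ∀ k, 0 ≤ lm k) :
    HasSum (productSkellamPMF lp lm) 1 := by
  have h : HasSum (productSkellamPMF lp lm) (∏ _k : Fin K, 1) :=
    hasSum_fin_pi_prod (fun k => skellamPMF_nonneg (hlp k) (hlm k))
      fun k => hasSum_skellamPMF (hlp k) (hlm k)
  rwa [prod_const_one] at h

end ProductSkellam

theorem miss_probability_eq_and_tendsto_zero_general
    (N M K : ℕ)
    (A : Matrix (Fin N) (Fin M) ℤ) (u : Fin N → ℤ)
    (B : Matrix (Fin M) (Fin K) ℤ)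
    (hBspan : ∀ v : Fin M → ℤ, A.mulVec v = 0 → ∃ y : Fin K → ℤ, v = B.mulVec y)
    (x xt : Fin M → ℤ)
    (hx : A.mulVec x = u ∧ ∀ m, 0 ≤ x m)
    (hxt : A.mulVec xt = u ∧ ∀ m, 0 ≤ xt m)
    (lp lm : Fin K → ℝ) (hlp : ∀ k, 0 < lp k) (hlm : ∀ k, 0 < lm k)
    (p : ℝ)
    (hp : p = ∑' y : {y : Fin K → ℤ // B.mulVec y = x - xt}, productSkellamPMF lp lm y.1) :
    (∀ J : ℕ,
        (∑' Ys : Fin J → (Fin K → ℤ),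
            if ∀ j : Fin J, x ≠ xt + B.mulVec (Ys j) then
              ∏ j : Fin J, productSkellamPMF lp lm (Ys j)
            else 0) = (1 - p) ^ J) ∧
      Filter.Tendsto
        (fun J : ℕ =>
          ∑' Ys : Fin J → (Fin K → ℤ),
            if ∀ j : Fin J, x ≠ xt + B.mulVec (Ys j) then
              ∏ j : Fin J, productSkellamPMF lp lm (Ys j)
            else 0)
        Filter.atTop (nhds 0) := by
  have hq0 := productSkellamPMF_nonneg (fun k => (hlp k).le) (fun k => (hlm k).le)
  have hq := hasSum_productSkellamPMF (fun k => (hlp k).le) (fun k => (hlm k).le)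
  set H : Set (Fin K → ℤ) := {y | B.mulVec y = x - xt}
  have hmiss_iff : ∀ y, x ≠ xt + B.mulVec y ↔ y ∈ Hᶜ := fun y => by
    simp only [H, Set.mem_compl_iff, Set.mem_ofPred_eq, ne_eq, eq_sub_iff_add_eq', eq_comm]
  have hmiss_eq : 1 - p = ∑' y : ↥Hᶜ, productSkellamPMF lp lm y := by
    rw [tsum_compl_eq_one_sub hq H, hp]
    rfl
  have hmiss : ∀ J : ℕ, (∑' Ys : Fin J → (Fin K → ℤ),
      if ∀ j : Fin J, x ≠ xt + B.mulVec (Ys j) then ∏ j : Fin J, productSkellamPMF lp lm (Ys j)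
      else 0) = (1 - p) ^ J := fun J => by
    simp only [hmiss_iff, hmiss_eq]
    exact tsum_ite_forall_mem_prod_eq_pow hq0 hq.summable Hᶜ J
  obtain ⟨y₀, hy₀⟩ := hBspan (x - xt) (by rw [Matrix.mulVec_sub, hx.1, hxt.1, sub_self])
  have hp_pos : 0 < p := hp ▸ (hq.summable.subtype H).tsum_pos (fun _ => hq0 _) ⟨y₀, hy₀.symm⟩
    (productSkellamPMF_pos hlp hlm y₀)
  have hmiss_nonneg : 0 ≤ 1 - p := hmiss_eq ▸ tsum_nonneg fun _ => hq0 _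
  refine ⟨hmiss, ?_⟩
  simp only [hmiss]
  exact tendsto_pow_atTop_nhds_zero_of_lt_one hmiss_nonneg (by linarith)

/-- probabilistic core of convergence in the sample size `J`.
With `p` the product-Skellam probability of proposing `x` from `x_t`, the probability
(under `J` i.i.d. product-Skellam draws `Y_1, …, Y_J`) that `x ≠ x_t + B Y_j` for all
`j` equals `(1 - p)^J`, and this probability tends to `0` as `J → ∞`. -/
theorem miss_probability_eq_and_tendsto_zero
    (N M K : ℕ) (hN : 1 ≤ N) (hM : 1 ≤ M) (hK : 1 ≤ K)
    (A : Matrix (Fin N) (Fin M) ℤ) (u : Fin N → ℤ)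
    (B : Matrix (Fin M) (Fin K) ℤ)
    (hBker : ∀ k : Fin K, A.mulVec (fun m => B m k) = 0)
    (hBspan : ∀ v : Fin M → ℤ, A.mulVec v = 0 → ∃ y : Fin K → ℤ, v = B.mulVec y)
    (x xt : Fin M → ℤ)
    (hx : A.mulVec x = u ∧ ∀ m, 0 ≤ x m)
    (hxt : A.mulVec xt = u ∧ ∀ m, 0 ≤ xt m)
    (lp lm : Fin K → ℝ) (hlp : ∀ k, 0 < lp k) (hlm : ∀ k, 0 < lm k)
    (p : ℝ)
    (hp : p = ∑' y : {y : Fin K → ℤ // B.mulVec y = x - xt}, productSkellamPMF lp lm y.1) :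
    (∀ J : ℕ,
        (∑' Ys : Fin J → (Fin K → ℤ),
            if ∀ j : Fin J, x ≠ xt + B.mulVec (Ys j) then
              ∏ j : Fin J, productSkellamPMF lp lm (Ys j)
            else 0) = (1 - p) ^ J) ∧
      Filter.Tendsto
        (fun J : ℕ =>
          ∑' Ys : Fin J → (Fin K → ℤ),
            if ∀ j : Fin J, x ≠ xt + B.mulVec (Ys j) then
              ∏ j : Fin J, productSkellamPMF lp lm (Ys j)
            else 0)
        Filter.atTop (nhds 0) :=
  miss_probability_eq_and_tendsto_zero_general N M K A u B hBspan x xt hx hxt lp lm hlp hlm p hp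
end

section
/- Let k ≥ 1 and let x ∈ ℤ^{4k+2} satisfy x ≥ 0 componentwise and A_k x = e_{2k+1}. Then exactly one of the following holds: (i) (x_{4k+1}, x_{4k+2}) = (1,0), x_i + x_{k+i} = 1 for every i ∈ {1,…,k} (so (x_1,…,x_k) and (x_{k+1},…,x_{2k}) are binary complements in {0,1}^k), and x_j = 0 for all 2k+1 ≤ j ≤ 4k; or (ii) (x_{4k+1}, x_{4k+2}) = (0,1), x_{2k+i} + x_{3k+i} = 1 for every i ∈ {1,…,k} (so (x_{2k+1},…,x_{3k}) and (x_{3k+1},…,x_{4k}) are binary complements in {0,1}^k), and x_j = 0 for all 1 ≤ j ≤ 2k. -/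
/-- The linear map `x ↦ A_k x` for the Hemmecke–Windisch matrix
`A_k = [I_k, I_k, 0, 0, -1_k, 0; 0, 0, I_k, I_k, 0, -1_k; 0, 0, 0, 0, 1, 1]`,
given row-wise (0-based indexing): for `r < k`, row `r` is `x_r + x_{k+r} - x_{4k}`;
for `k ≤ r < 2k`, row `r` is `x_{k+r} + x_{2k+r} - x_{4k+1}`
(that is, `x_{2k+i} + x_{3k+i} - x_{4k+1}` with `i = r - k`);
and the last row (`r = 2k`) is `x_{4k} + x_{4k+1}`. -/
def AkMulVec (k : ℕ) (x : Fin (4 * k + 2) → ℤ) : Fin (2 * k + 1) → ℤ := fun r =>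
  if h : (r : ℕ) < k then
    x ⟨(r : ℕ), by omega⟩ + x ⟨k + (r : ℕ), by omega⟩ - x ⟨4 * k, by omega⟩
  else if h2 : (r : ℕ) < 2 * k then
    x ⟨k + (r : ℕ), by omega⟩ + x ⟨2 * k + (r : ℕ), by omega⟩ - x ⟨4 * k + 1, by omega⟩
  else
    x ⟨4 * k, by omega⟩ + x ⟨4 * k + 1, by omega⟩

/-- The last standard basis vector `e_{2k+1} ∈ ℤ^{2k+1}` (0-based index `2k`). -/
def lastStdBasis (k : ℕ) : Fin (2 * k + 1) → ℤ := fun r => if (r : ℕ) = 2 * k then 1 else 0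

/-!
The last row of `A_k x = e_{2k+1}` says that the two selector coordinates `x_{4k+1}, x_{4k+2}`
are nonnegative integers summing to `1`, so one is `1` and the other `0`. Every other row says
that a pair of coordinates sums to one of the selectors: the pairs of the selected block sum to
`1`, hence are complementary bits, while the pairs of the other block sum to `0`, hence vanish
by nonnegativity.
-/

theorem Int.add_eq_one_iff_of_nonneg {a b : ℤ} (ha : 0 ≤ a) (hb : 0 ≤ b) :
    a + b = 1 ↔ a = 0 ∧ b = 1 ∨ a = 1 ∧ b = 0 := by
  omega

theorem eq_zero_of_pair_add_eq_zero {n m k : ℕ} {x : Fin n → ℤ} (hx : ∀ j, 0 ≤ x j)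
    (hn : m + 2 * k ≤ n)
    (hpair : ∀ j j' : Fin n, m ≤ j → (j : ℕ) < m + k → (j' : ℕ) = j + k → x j + x j' = 0)
    (j : Fin n) (hmj : m ≤ j) (hjm : (j : ℕ) < m + 2 * k) : x j = 0 := by
  by_cases hj : (j : ℕ) < m + k
  · have := hpair j ⟨j + k, by omega⟩ hmj hj rfl
    linarith [hx j, hx ⟨j + k, by omega⟩]
  · have := hpair ⟨j - k, by omega⟩ j (by simp only; omega) (by simp only; omega)
      (by simp only; omega)
    linarith [hx j, hx ⟨j - k, by omega⟩]

theorem apply_eq_apply_mk {n : ℕ} {α : Type*} (f : Fin n → α) {i : Fin n} {m : ℕ}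
    (h : (i : ℕ) = m) (hm : m < n) : f i = f ⟨m, hm⟩ :=
  congrArg f (Fin.ext h)

section Fiber

variable {k : ℕ} {x : Fin (4 * k + 2) → ℤ}

theorem selector_add_selector_eq_one (hAx : AkMulVec k x = lastStdBasis k)
    {s t : Fin (4 * k + 2)} (hs : (s : ℕ) = 4 * k) (ht : (t : ℕ) = 4 * k + 1) : x s + x t = 1 := by
  have h := congrFun hAx (Fin.last (2 * k))
  simp only [AkMulVec, lastStdBasis, Fin.val_last, dif_neg (show ¬ 2 * k < k by omega),
    lt_irrefl, dite_false, if_true] at h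
  rwa [apply_eq_apply_mk x hs (by omega), apply_eq_apply_mk x ht (by omega)]

theorem firstBlock_pair_add_eq (hAx : AkMulVec k x = lastStdBasis k) {j j' s : Fin (4 * k + 2)}
    (hj : (j : ℕ) < k) (hj' : (j' : ℕ) = j + k) (hs : (s : ℕ) = 4 * k) : x j + x j' = x s := by
  have h := congrFun hAx ⟨j, by omega⟩
  simp only [AkMulVec, lastStdBasis, dif_pos hj, if_neg (show (j : ℕ) ≠ 2 * k by omega),
    Fin.eta] at h
  rw [apply_eq_apply_mk x (show (j' : ℕ) = k + j by omega) (by omega),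
    apply_eq_apply_mk x hs (by omega)]
  linarith

theorem secondBlock_pair_add_eq (hAx : AkMulVec k x = lastStdBasis k) {j j' t : Fin (4 * k + 2)}
    (hj : 2 * k ≤ j) (hj2 : (j : ℕ) < 3 * k) (hj' : (j' : ℕ) = j + k) (ht : (t : ℕ) = 4 * k + 1) :
    x j + x j' = x t := by
  have h := congrFun hAx ⟨j - k, by omega⟩
  simp only [AkMulVec, lastStdBasis, dif_neg (show ¬ (j : ℕ) - k < k by omega),
    dif_pos (show (j : ℕ) - k < 2 * k by omega), if_neg (show (j : ℕ) - k ≠ 2 * k by omega)] at h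
  rw [apply_eq_apply_mk x (show (j : ℕ) = k + (j - k) by omega) (by omega),
    apply_eq_apply_mk x (show (j' : ℕ) = 2 * k + (j - k) by omega) (by omega),
    apply_eq_apply_mk x ht (by omega)]
  linarith

end Fiber

/-- If `x ∈ ℤ^{4k+2}` is componentwise nonnegative and `A_k x = e_{2k+1}`,
then exactly one of the following two alternatives holds (1-based indexing as in the paper):
(i) `(x_{4k+1}, x_{4k+2}) = (1,0)`, `x_i + x_{k+i} = 1` for all `i ∈ {1,…,k}` (so
`(x_1,…,x_k)` and `(x_{k+1},…,x_{2k})` are binary complements in `{0,1}^k`), and `x_j = 0`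
for `2k+1 ≤ j ≤ 4k`; or (ii) `(x_{4k+1}, x_{4k+2}) = (0,1)`, `x_{2k+i} + x_{3k+i} = 1`
for all `i ∈ {1,…,k}` (binary complements), and `x_j = 0` for `1 ≤ j ≤ 2k`. -/
theorem fiber_is_two_binary_segments
    (k : ℕ) (x : Fin (4 * k + 2) → ℤ)
    (hnonneg : ∀ j, 0 ≤ x j)
    (hAx : AkMulVec k x = lastStdBasis k) :
    Xor'
      (x ⟨4 * k, by omega⟩ = 1 ∧ x ⟨4 * k + 1, by omega⟩ = 0 ∧
        (∀ i : Fin k,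
          x ⟨(i : ℕ), by have := i.isLt; omega⟩ + x ⟨k + (i : ℕ), by have := i.isLt; omega⟩ = 1 ∧
          (x ⟨(i : ℕ), by have := i.isLt; omega⟩ = 0 ∨ x ⟨(i : ℕ), by have := i.isLt; omega⟩ = 1)) ∧
        (∀ j : Fin (4 * k + 2), 2 * k ≤ (j : ℕ) → (j : ℕ) < 4 * k → x j = 0))
      (x ⟨4 * k, by omega⟩ = 0 ∧ x ⟨4 * k + 1, by omega⟩ = 1 ∧
        (∀ i : Fin k,
          x ⟨2 * k + (i : ℕ), by have := i.isLt; omega⟩ +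
            x ⟨3 * k + (i : ℕ), by have := i.isLt; omega⟩ = 1 ∧
          (x ⟨2 * k + (i : ℕ), by have := i.isLt; omega⟩ = 0 ∨
            x ⟨2 * k + (i : ℕ), by have := i.isLt; omega⟩ = 1)) ∧
        (∀ j : Fin (4 * k + 2), (j : ℕ) < 2 * k → x j = 0)) := by
  have hsel := selector_add_selector_eq_one hAx (s := ⟨4 * k, by omega⟩)
    (t := ⟨4 * k + 1, by omega⟩) rfl rfl
  have isBit {a b : ℤ} (ha : 0 ≤ a) (hb : 0 ≤ b) (hab : a + b = 1) : a = 0 ∨ a = 1 :=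
    ((Int.add_eq_one_iff_of_nonneg ha hb).1 hab).imp And.left And.left
  rcases (Int.add_eq_one_iff_of_nonneg (hnonneg _) (hnonneg _)).1 hsel with ⟨ha, hb⟩ | ⟨ha, hb⟩
  · refine Or.inr ⟨⟨ha, hb, fun i => ?_, fun j hj => ?_⟩, fun h => by omega⟩
    · have hpair := (secondBlock_pair_add_eq hAx (j := ⟨2 * k + i, by omega⟩)
        (j' := ⟨3 * k + i, by omega⟩) (by simp only; omega) (by simp only; omega)
        (by simp only; omega) rfl).trans hb
      exact ⟨hpair, isBit (hnonneg _) (hnonneg _) hpair⟩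
    · exact eq_zero_of_pair_add_eq_zero (m := 0) hnonneg (by omega)
        (fun j j' _ hj hj' => (firstBlock_pair_add_eq hAx (by omega) hj' rfl).trans ha)
        j (Nat.zero_le _) (by omega)
  · refine Or.inl ⟨⟨ha, hb, fun i => ?_, fun j hj hj' => ?_⟩, fun h => by omega⟩
    · have hpair := (firstBlock_pair_add_eq hAx (j := ⟨i, by omega⟩) (j' := ⟨k + i, by omega⟩)
        i.isLt (Nat.add_comm _ _) rfl).trans ha
      exact ⟨hpair, isBit (hnonneg _) (hnonneg _) hpair⟩
    · exact eq_zero_of_pair_add_eq_zero hnonneg (by omega)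
        (fun j j' hj hj2 hj' => (secondBlock_pair_add_eq hAx hj (by omega) hj' rfl).trans hb)
        j hj (by omega)
end
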